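/- arXiv:2601.19466 — 4 statements merged into one kernel-verified Lean document; each statement's English description precedes it below -/
import Mathlib

section
/- Let N be a finite set and M : N × N → Bool a Boolean matrix (product over the Boolean semiring) satisfying M·M = M. If A₀, A₁, …, A_{|N|} is a sequence of elements of N such that M(A_i, A_{i+1}) = true for all i < |N|, then there exists an index i ≤ |N| such that M(A_i, A_i) = true. -/
/-- Product of Boolean matrices over the Boolean semiring (∨, ∧). -/
def bmul {N : Type*} [Fintype N] (M₁ M₂ : N → N → Bool) : N → N → Bool :=
  fun a c => decide (∃ b, M₁ a b = true ∧ M₂ b c = true)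

theorem stmt0 {N : Type*} [Fintype N] (M : N → N → Bool)
    (hidem : bmul M M = M) (A : ℕ → N)
    (hA : ∀ i < Fintype.card N, M (A i) (A (i + 1)) = true) :
    ∃ i ≤ Fintype.card N, M (A i) (A i) = true := by
  have key : ∀ j, j ≤ Fintype.card N → ∀ i < j, M (A i) (A j) = true := by
    intro j hj
    induction j with
    | zero => intro i hi; omega
    | succ j ih =>
      intro i hi
      rcases Nat.lt_succ_iff_lt_or_eq.mp hi with h | h
      · have hstep : M (A j) (A (j + 1)) = true := hA j (by omega)
        have hij : M (A i) (A j) = true := ih (by omega) i h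
        have := congrFun (congrFun hidem (A i)) (A (j + 1))
        rw [← this]
        simp only [bmul, decide_eq_true_eq]
        exact ⟨A j, hij, hstep⟩
      · subst h; exact hA i (by omega)
  -- pigeonhole: two equal among A 0 .. A (card N)
  have : ¬ Function.Injective (fun i : Fin (Fintype.card N + 1) => A i.val) := by
    intro hinj
    have := Fintype.card_le_of_injective _ hinj
    simp [Fintype.card_fin] at this
  rw [Function.not_injective_iff] at this
  obtain ⟨i, j, heq, hne⟩ := this
  rcases Ne.lt_or_gt (fun h : (i:ℕ) = (j:ℕ) => hne (Fin.ext h)) with h | h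
  · have h2 := key j j.is_le i h
    rw [← heq] at h2
    exact ⟨i, by omega, h2⟩
  · have h2 := key i i.is_le j h
    rw [heq] at h2
    exact ⟨j, by omega, h2⟩
end

section
/- Let n ≥ 1 and let Σₙ = {inc₁, …, incₙ}. For each i, define the DFA A_i with states {0ᵢ, 1ᵢ}, initial state 0ᵢ, accepting state 1ᵢ, and partial transition function: from 0ᵢ, reading inc_j goes to 1ᵢ if j = i, stays at 0ᵢ if j < i, and is undefined if j > i; from 1ᵢ, reading inc_j goes to 0ᵢ if j > i, stays at 1ᵢ if j < i, and is undefined if j = i. Then the intersection ⋂_{i=1}^n L(A_i) contains exactly one word, and that word has length 2ⁿ − 1. -/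
/-- Partial transition function of the DFA `A_i` over the alphabet `Σₙ = Fin n`
(`false` is state `0ᵢ`, `true` is state `1ᵢ`). -/
def delta (n : ℕ) (i : Fin n) (b : Bool) (j : Fin n) : Option Bool :=
  match b with
  | false => if j = i then some true else if j < i then some false else none
  | true  => if j = i then none else if j < i then some true else some false

/-- Run of the DFA `A_i` from state `b`, undefined if it gets stuck. -/
def run (n : ℕ) (i : Fin n) : Bool → List (Fin n) → Option Bool
  | b, [] => some b
  | b, j :: w => (delta n i b j).bind fun b' => run n i b' w

/-- `A_i` accepts `w`: the run from the initial state `0ᵢ` is everywhere defined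
and ends in the accepting state `1ᵢ`. -/
def acceptsA (n : ℕ) (i : Fin n) (w : List (Fin n)) : Prop :=
  run n i false w = some true


lemma hdiv1 (p A : ℕ) (hA : 1 ≤ A) : (2^p * A - 1) / 2^p = A - 1 := by
  have hp : 0 < 2^p := Nat.two_pow_pos p
  have h1 : 2^p * A - 1 = (2^p - 1) + 2^p * (A - 1) := by
    have h2 : 2^p * A = 2^p * (A-1) + 2^p := by
      rw [← Nat.mul_succ]; congr 1; omega
    omega
  rw [h1, Nat.add_mul_div_left _ _ hp, Nat.div_eq_of_lt (by omega)]; omega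

lemma bit_eq (k v m : ℕ) (hm : m % 2 = 1) (hk : k + 1 = 2^v * m) :
    k.testBit v = false ∧ (k+1).testBit v = true := by
  have hm1 : 1 ≤ m := by omega
  have h2 : (k+1) / 2^v = m := by rw [hk, Nat.mul_div_cancel_left _ (Nat.two_pow_pos v)]
  have h1 : k / 2^v = m - 1 := by
    have h : k = 2^v * m - 1 := by omega
    rw [h, hdiv1 _ _ hm1]
  rw [Nat.testBit_eq_decide_div_mod_eq, Nat.testBit_eq_decide_div_mod_eq, h1, h2]
  constructor <;> simp <;> omega

lemma bit_lt (k v m i : ℕ) (hm : m % 2 = 1) (hk : k + 1 = 2^v * m) (hi : i < v) :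
    k.testBit i = true ∧ (k+1).testBit i = false := by
  have hm1 : 1 ≤ m := by omega
  obtain ⟨d, hd⟩ : ∃ d, v = i + d + 1 := ⟨v - i - 1, by omega⟩
  set A := 2^d * m with hA
  have hA1 : 1 ≤ A := Nat.one_le_iff_ne_zero.mpr (by positivity)
  have hk2 : k + 1 = 2^i * (2 * A) := by rw [hk, hd, hA]; ring
  have h2 : (k+1) / 2^i = 2 * A := by
    rw [hk2, Nat.mul_div_cancel_left _ (Nat.two_pow_pos i)]
  have h1 : k / 2^i = 2 * A - 1 := by
    have h : k = 2^i * (2*A) - 1 := by omega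
    rw [h, hdiv1 _ _ (by omega)]
  rw [Nat.testBit_eq_decide_div_mod_eq, Nat.testBit_eq_decide_div_mod_eq, h1, h2]
  constructor <;> simp <;> omega

lemma bit_gt (k v m i : ℕ) (hm : m % 2 = 1) (hk : k + 1 = 2^v * m) (hi : v < i) :
    (k+1).testBit i = k.testBit i := by
  have hm1 : 1 ≤ m := by omega
  obtain ⟨d, hd⟩ : ∃ d, i = v + (d + 1) := ⟨i - v - 1, by omega⟩
  have h2v : (k+1) / 2^v = m := by rw [hk, Nat.mul_div_cancel_left _ (Nat.two_pow_pos v)]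
  have h1v : k / 2^v = m - 1 := by
    have h : k = 2^v * m - 1 := by omega
    rw [h, hdiv1 _ _ hm1]
  have hsplit : ∀ x : ℕ, x / 2^i = x / 2^v / 2^(d+1) := by
    intro x; rw [Nat.div_div_eq_div_mul, ← pow_add, ← hd]
  have hm2 : m / 2^(d+1) = (m-1) / 2^(d+1) := by
    rw [pow_succ', ← Nat.div_div_eq_div_mul, ← Nat.div_div_eq_div_mul]
    congr 1; omega
  rw [Nat.testBit_eq_decide_div_mod_eq, Nat.testBit_eq_decide_div_mod_eq, hsplit, hsplit, h1v, h2v, hm2]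

lemma val2 (k : ℕ) : ∃ v m, m % 2 = 1 ∧ k + 1 = 2 ^ v * m := by
  refine ⟨(k+1).factorization 2, ordCompl[2] (k+1), ?_, ?_⟩
  · have h := Nat.not_dvd_ordCompl (p := 2) Nat.prime_two (Nat.succ_ne_zero k)
    exact Nat.two_dvd_ne_zero.mp h
  · exact (Nat.ordProj_mul_ordCompl_eq_self (k+1) 2).symm

lemma step (n k : ℕ) (hk : k + 1 < 2^n) :
    ∃ j : Fin n, ∀ i : Fin n, delta n i (k.testBit i) j = some ((k+1).testBit i) := by
  obtain ⟨v, m, hm, hkm⟩ := val2 k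
  have hv : v < n := by
    have h2 : 2^v ≤ k+1 := by
      calc 2^v = 2^v * 1 := by ring
      _ ≤ 2^v * m := Nat.mul_le_mul_left _ (by omega)
      _ = k + 1 := hkm.symm
    have : (2:ℕ)^v < 2^n := by omega
    exact (Nat.pow_lt_pow_iff_right (by norm_num)).mp this
  refine ⟨⟨v, hv⟩, fun i => ?_⟩
  rcases lt_trichotomy (i : ℕ) v with h | h | h
  · obtain ⟨h1, h2⟩ := bit_lt k v m i hm hkm h
    rw [h1, h2]
    simp only [delta, Fin.ext_iff, Fin.lt_def]
    rw [if_neg (by omega), if_neg (by omega)]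
  · obtain ⟨h1, h2⟩ := bit_eq k v m hm hkm
    subst h
    rw [h1, h2]
    simp [delta]
  · rw [bit_gt k v m i hm hkm h]
    cases hb : k.testBit i <;>
    · simp only [delta, Fin.ext_iff, Fin.lt_def]
      rw [if_neg (by omega), if_pos (by omega)]

lemma run_append (n : ℕ) (i : Fin n) (b : Bool) (w1 w2 : List (Fin n)) :
    run n i b (w1 ++ w2) = (run n i b w1).bind (fun b' => run n i b' w2) := by
  induction w1 generalizing b with
  | nil => simp [run]
  | cons j w ih =>
    simp only [List.cons_append, run]
    cases delta n i b j with
    | none => rfl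
    | some b' => simp [ih]

lemma exists_chain (n K : ℕ) (hK : K ≤ 2^n - 1) :
    ∃ w : List (Fin n), w.length = K ∧ ∀ i : Fin n, run n i false w = some (K.testBit i) := by
  induction K with
  | zero => exact ⟨[], rfl, fun i => by simp [run, Nat.zero_testBit]⟩
  | succ k ih =>
    obtain ⟨w, hlen, hrun⟩ := ih (by omega)
    have hk1 : k + 1 < 2^n := by
      have : 1 ≤ 2^n := Nat.one_le_two_pow
      omega
    obtain ⟨j, hj⟩ := step n k hk1
    refine ⟨w ++ [j], by simp [hlen], fun i => ?_⟩
    rw [run_append, hrun i]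
    simp [run, hj i]

lemma run_cons_some (n : ℕ) (i : Fin n) (b : Bool) (j : Fin n) (w : List (Fin n))
    (h : run n i b (j :: w) = some true) :
    ∃ b', delta n i b j = some b' ∧ run n i b' w = some true := by
  simp only [run, Option.bind_eq_some_iff] at h
  exact h

lemma uniq (n : ℕ) (w : List (Fin n)) : ∀ (w' : List (Fin n)) (s : Fin n → Bool),
    (∀ i, run n i (s i) w = some true) → (∀ i, run n i (s i) w' = some true) → w' = w := by
  induction w with
  | nil =>
    intro w' s h h'
    have hs : ∀ i, s i = true := fun i => by simpa [run] using h i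
    cases w' with
    | nil => rfl
    | cons j rest =>
      exfalso
      have hx := h' j
      rw [hs j] at hx
      simp [run, delta] at hx
  | cons j rest ih =>
    intro w' s h h'
    have hfalse : ∀ (v : List (Fin n)) (i : Fin n), run n i (s i) (i :: v) = some true →
        s i = false := by
      intro v i hr
      cases hb : s i with
      | false => rfl
      | true =>
        rw [hb] at hr
        simp [run, delta] at hr
    have hord : ∀ (v : List (Fin n)) (i i' : Fin n), i ≠ i' → s i' = false →
        run n i' (s i') (i :: v) = some true → i < i' := by
      intro v i i' hne hsf hr
      rw [hsf] at hr
      obtain ⟨b', hd, _⟩ := run_cons_some n i' false i v hr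
      simp only [delta] at hd
      by_contra hlt
      rw [if_neg hne, if_neg hlt] at hd
      cases hd
    have hsj : s j = false := hfalse rest j (h j)
    cases w' with
    | nil =>
      exfalso
      have h1 := h' j
      simp only [run] at h1
      rw [hsj] at h1
      exact Bool.noConfusion (Option.some.inj h1)
    | cons j' rest' =>
      have hsj' : s j' = false := hfalse rest' j' (h' j')
      have hjj' : j' = j := by
        by_contra hne
        have h1 : j' < j := hord rest' j' j (fun hc => hne hc) hsj (h' j)
        have h2 : j < j' := hord rest j j' (fun hc => hne hc.symm) hsj' (h j')
        exact absurd h1 (not_lt.mpr h2.le)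
      subst hjj'
      -- now the letter is called j', and h : ∀ i, run n i (s i) (j' :: rest) = some true
      set s2 : Fin n → Bool := fun i => if i = j' then true else if i < j' then false else s i
        with hs2
      have hdelta : ∀ i : Fin n, delta n i (s i) j' = some (s2 i) := by
        intro i
        rcases eq_or_ne i j' with hij | hij
        · subst hij
          rw [hsj']
          simp [delta, hs2]
        · rcases lt_or_gt_of_ne (fun hc => hij (Fin.ext hc) : (i:ℕ) ≠ (j':ℕ)) with hlt | hgt
          · have hst : s i = true := by
              cases hb : s i with
              | true => rfl
              | false =>
                obtain ⟨b', hd, _⟩ := run_cons_some n i (s i) j' rest (h i)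
                rw [hb] at hd
                simp only [delta] at hd
                rw [if_neg (fun hc => hij hc.symm),
                  if_neg (show ¬ j' < i by rw [Fin.lt_def]; omega)] at hd
                cases hd
            rw [hst]
            simp only [delta, hs2]
            rw [if_neg (fun hc => hij hc.symm), if_neg (show ¬ j' < i by rw [Fin.lt_def]; omega),
              if_neg hij, if_pos (show i < j' by rw [Fin.lt_def]; omega)]
          · have hs2i : s2 i = s i := by
              simp only [hs2]
              rw [if_neg hij, if_neg (show ¬ i < j' by rw [Fin.lt_def]; omega)]
            rw [hs2i]
            cases hb : s i <;>
            · simp only [delta]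
              rw [if_neg (fun hc => hij hc.symm), if_pos (show j' < i by rw [Fin.lt_def]; omega)]
      have hrest : ∀ i, run n i (s2 i) rest = some true := by
        intro i
        obtain ⟨b', hd, hr⟩ := run_cons_some n i (s i) j' rest (h i)
        rw [hdelta i] at hd
        rwa [Option.some.inj hd]
      have hrest' : ∀ i, run n i (s2 i) rest' = some true := by
        intro i
        obtain ⟨b', hd, hr⟩ := run_cons_some n i (s i) j' rest' (h' i)
        rw [hdelta i] at hd
        rwa [Option.some.inj hd]
      rw [ih rest' s2 hrest hrest']

theorem stmt8 (n : ℕ) (hn : 1 ≤ n) :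
    ∃ w : List (Fin n), (∀ i : Fin n, acceptsA n i w) ∧ w.length = 2 ^ n - 1 ∧
      ∀ w' : List (Fin n), (∀ i : Fin n, acceptsA n i w') → w' = w := by
  obtain ⟨w, hlen, hrun⟩ := exists_chain n (2^n - 1) le_rfl
  have hacc : ∀ i : Fin n, run n i false w = some true := by
    intro i
    rw [hrun i, Nat.testBit_two_pow_sub_one]
    simp [i.isLt]
  exact ⟨w, hacc, hlen, fun w' h' => uniq n w w' (fun _ => false) hacc h'⟩
end

section
/- Any two words u, v ∈ {0,1}* with |u| = |v| = m and u ≠ v are distinguished by the downward closure of Lₘ = {xy : x,y ∈ {0,1}^m, x ≠ y} in the sense of Myhill–Nerode: uv ∈ ↓Lₘ and vu ∈ ↓Lₘ but uu ∉ ↓Lₘ. Consequently, every DFA recognizing ↓Lₘ has at least 2^m states. -/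
/-- Downward closure of a language under the scattered subword relation. -/
def dcl {A : Type*} (L : Set (List A)) : Set (List A) := {u | ∃ v ∈ L, List.Sublist u v}

/-- `Lₘ = {xy | x, y ∈ {0,1}^m, x ≠ y}`. -/
def Lm (m : ℕ) : Set (List Bool) :=
  {w | ∃ x y : List Bool, x.length = m ∧ y.length = m ∧ x ≠ y ∧ w = x ++ y}

theorem stmt10 (m : ℕ) :
    (∀ u v : List Bool, u.length = m → v.length = m → u ≠ v →
      u ++ v ∈ dcl (Lm m) ∧ v ++ u ∈ dcl (Lm m) ∧ u ++ u ∉ dcl (Lm m)) ∧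
    (∀ (σ : Type) [Fintype σ] (d : DFA Bool σ),
      (∀ w : List Bool, w ∈ d.accepts ↔ w ∈ dcl (Lm m)) → 2 ^ m ≤ Fintype.card σ) := by
  have key : ∀ u v : List Bool, u.length = m → v.length = m → u ≠ v →
      u ++ v ∈ dcl (Lm m) ∧ v ++ u ∈ dcl (Lm m) ∧ u ++ u ∉ dcl (Lm m) := by
    intro u v hu hv huv
    refine ⟨⟨u ++ v, ⟨u, v, hu, hv, huv, rfl⟩, List.Sublist.refl _⟩,
      ⟨v ++ u, ⟨v, u, hv, hu, Ne.symm huv, rfl⟩, List.Sublist.refl _⟩, ?_⟩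
    rintro ⟨w, ⟨x, y, hx, hy, hxy, rfl⟩, hsub⟩
    have hlen : (u ++ u).length = (x ++ y).length := by simp [hu, hx, hy]
    have heq : u ++ u = x ++ y := hsub.eq_of_length hlen
    obtain ⟨h1, h2⟩ := List.append_inj heq (by rw [hu, hx])
    exact hxy (h1.symm.trans h2)
  refine ⟨key, ?_⟩
  intro σ _ d hacc
  have hinj : Function.Injective
      (fun x : List.Vector Bool m => d.eval x.toList) := by
    intro x y hxy
    by_contra hne
    have hl : x.toList ≠ y.toList := fun h => hne (List.Vector.eq _ _ h)
    obtain ⟨h1, h2, h3⟩ := key x.toList y.toList x.toList_length y.toList_length hl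
    have e1 : d.eval (x.toList ++ x.toList) = d.eval (y.toList ++ x.toList) := by
      simp only [DFA.eval, DFA.evalFrom_of_append]
      rw [show d.evalFrom d.start x.toList = d.evalFrom d.start y.toList from hxy]
    have hA : y.toList ++ x.toList ∈ d.accepts := (hacc _).2 h2
    have hB : x.toList ++ x.toList ∉ d.accepts := fun h => h3 ((hacc _).1 h)
    rw [DFA.mem_accepts] at hA hB
    exact hB (e1 ▸ hA)
  calc 2 ^ m = Fintype.card (List.Vector Bool m) := by simp
    _ ≤ Fintype.card σ := Fintype.card_le_of_injective _ hinj
end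

section
/- Let G be a context-free grammar (in the normal form with productions A → w for w a terminal word and A → BC) and let G' be obtained by the annotation construction: nonterminals are pairs (A, X) with A ∈ X ⊆ N, and productions (A,X) → w whenever A → w ∈ P, and (A,X) → (B,X)(C,X) whenever A → BC ∈ P with A,B,C ∈ X. If X = U, the set of productive nonterminals of G (those deriving some terminal word), and the start symbol S ∈ U, then L(G') = L(G) with start symbol (S,U), and G' is productive: every sentential form derivable from (S,U) derives some terminal word. -/
/-- A context-free grammar in normal form: productions `A → w` (`w` a terminal word)
and `A → BC`. -/
structure CFG (ν τ : Type) where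
  prodW : ν → List τ → Prop
  prodBC : ν → ν → ν → Prop
  start : ν

/-- One derivation step on sentential forms (words over nonterminals and terminals). -/
def CFG.Step {ν τ : Type} (G : CFG ν τ) (u v : List (ν ⊕ τ)) : Prop :=
  ∃ (x y : List (ν ⊕ τ)) (A : ν), u = x ++ [Sum.inl A] ++ y ∧
    ((∃ w : List τ, G.prodW A w ∧ v = x ++ w.map Sum.inr ++ y) ∨
     (∃ B C : ν, G.prodBC A B C ∧ v = x ++ [Sum.inl B, Sum.inl C] ++ y))

/-- Multi-step derivation. -/
def CFG.Derives {ν τ : Type} (G : CFG ν τ) : List (ν ⊕ τ) → List (ν ⊕ τ) → Prop :=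
  Relation.ReflTransGen G.Step

/-- Language generated by the grammar. -/
def CFG.Lang {ν τ : Type} (G : CFG ν τ) : Set (List τ) :=
  {w | G.Derives [Sum.inl G.start] (w.map Sum.inr)}

/-- A nonterminal is productive if it derives some terminal word. -/
def CFG.ProductiveNT {ν τ : Type} (G : CFG ν τ) (A : ν) : Prop :=
  ∃ w : List τ, G.Derives [Sum.inl A] (w.map Sum.inr)

/-- The annotated grammar: nonterminals are pairs `(A, X)` with `A ∈ X`, productions
`(A,X) → w` whenever `A → w`, and `(A,X) → (B,X)(C,X)` whenever `A → BC` with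
`A, B, C ∈ X`; the start symbol is `(S, U)` with `U` the set of productive
nonterminals. -/
def annot {ν τ : Type} (G : CFG ν τ) : CFG (ν × Set ν) τ where
  prodW := fun p w => p.1 ∈ p.2 ∧ G.prodW p.1 w
  prodBC := fun p q r =>
    p.1 ∈ p.2 ∧ q.1 ∈ q.2 ∧ r.1 ∈ r.2 ∧ q.2 = p.2 ∧ r.2 = p.2 ∧ G.prodBC p.1 q.1 r.1
  start := (G.start, {A | G.ProductiveNT A})

namespace CFG

variable {ν τ : Type}

theorem step_append_left (G : CFG ν τ) {u v : List (ν ⊕ τ)} (h : G.Step u v)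
    (p : List (ν ⊕ τ)) : G.Step (p ++ u) (p ++ v) := by
  obtain ⟨x, y, A, hu, hv⟩ := h
  refine ⟨p ++ x, y, A, by simp [hu], ?_⟩
  rcases hv with ⟨w, hw, rfl⟩ | ⟨B, C, hBC, rfl⟩
  · exact Or.inl ⟨w, hw, by simp⟩
  · exact Or.inr ⟨B, C, hBC, by simp⟩

theorem step_append_right (G : CFG ν τ) {u v : List (ν ⊕ τ)} (h : G.Step u v)
    (q : List (ν ⊕ τ)) : G.Step (u ++ q) (v ++ q) := by
  obtain ⟨x, y, A, hu, hv⟩ := h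
  refine ⟨x, y ++ q, A, by simp [hu], ?_⟩
  rcases hv with ⟨w, hw, rfl⟩ | ⟨B, C, hBC, rfl⟩
  · exact Or.inl ⟨w, hw, by simp⟩
  · exact Or.inr ⟨B, C, hBC, by simp⟩

theorem derives_append_left (G : CFG ν τ) {u v : List (ν ⊕ τ)} (h : G.Derives u v)
    (p : List (ν ⊕ τ)) : G.Derives (p ++ u) (p ++ v) :=
  Relation.ReflTransGen.lift (fun z => p ++ z) (fun _ _ hab => G.step_append_left hab p) _ _ h

theorem derives_append_right (G : CFG ν τ) {u v : List (ν ⊕ τ)} (h : G.Derives u v)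
    (q : List (ν ⊕ τ)) : G.Derives (u ++ q) (v ++ q) :=
  Relation.ReflTransGen.lift (fun z => z ++ q) (fun _ _ hab => G.step_append_right hab q) _ _ h

theorem derives_append (G : CFG ν τ) {u u' v v' : List (ν ⊕ τ)} (h : G.Derives u u')
    (h' : G.Derives v v') : G.Derives (u ++ v) (u' ++ v') :=
  (G.derives_append_right h v).trans (G.derives_append_left h' u')

/-- If every symbol of `u` is a terminal or a productive nonterminal, then `u`
derives some terminal word. -/
theorem derives_of_forall_productive (G : CFG ν τ) :
    ∀ u : List (ν ⊕ τ),
      (∀ s ∈ u, (∃ t, s = Sum.inr t) ∨ ∃ A, s = Sum.inl A ∧ G.ProductiveNT A) →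
      ∃ w : List τ, G.Derives u (w.map Sum.inr) := by
  intro u
  induction u with
  | nil => exact fun _ => ⟨[], Relation.ReflTransGen.refl⟩
  | cons s rest ih =>
    intro h
    obtain ⟨w', hw'⟩ := ih fun s hs => h s (List.mem_cons_of_mem _ hs)
    rcases h s List.mem_cons_self with ⟨t, rfl⟩ | ⟨A, rfl, wA, hA⟩
    · refine ⟨t :: w', ?_⟩
      have := G.derives_append_left hw' [Sum.inr t]
      simpa using this
    · refine ⟨wA ++ w', ?_⟩
      have := G.derives_append hA hw'
      simpa using this

/-- Every nonterminal occurring in a sentential form that derives a terminal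
word is productive. -/
theorem productive_of_mem (G : CFG ν τ) {u : List (ν ⊕ τ)} {w : List τ}
    (h : G.Derives u (w.map Sum.inr)) :
    ∀ A, Sum.inl A ∈ u → G.ProductiveNT A := by
  induction h using Relation.ReflTransGen.head_induction_on with
  | refl =>
    intro A hA
    obtain ⟨t, _, ht⟩ := List.mem_map.mp hA
    exact absurd ht (by simp)
  | head hstep _ ih =>
    rename_i u v
    intro A hA
    obtain ⟨x, y, A', hu, hv⟩ := hstep
    subst hu
    rcases hv with ⟨w', hw', rfl⟩ | ⟨B, C, hBC, rfl⟩
    · rcases List.mem_append.mp hA with hx | hy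
      rcases List.mem_append.mp hx with hx | hA'
      · exact ih A (by simp [hx])
      · have : A = A' := by simpa using hA'
        subst this
        exact ⟨w', Relation.ReflTransGen.single
          ⟨[], [], A, by simp, Or.inl ⟨w', hw', by simp⟩⟩⟩
      · exact ih A (by simp [hy])
    · rcases List.mem_append.mp hA with hx | hy
      rcases List.mem_append.mp hx with hx | hA'
      · exact ih A (by simp [hx])
      · have : A = A' := by simpa using hA'
        subst this
        obtain ⟨wB, hB⟩ := ih B (by simp)
        obtain ⟨wC, hC⟩ := ih C (by simp)
        refine ⟨wB ++ wC, Relation.ReflTransGen.head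
          (b := [Sum.inl B, Sum.inl C])
          ⟨[], [], A, by simp, Or.inr ⟨B, C, hBC, by simp⟩⟩ ?_⟩
        have := G.derives_append hB hC
        simpa [CFG.Derives] using this
      · exact ih A (by simp [hy])

end CFG

section Annot

variable {ν τ : Type}

/-- Forget the annotation. -/
def projSym : (ν × Set ν) ⊕ τ → ν ⊕ τ := Sum.map Prod.fst id

theorem annot_step_proj (G : CFG ν τ) {u v : List ((ν × Set ν) ⊕ τ)}
    (h : (annot G).Step u v) : G.Step (u.map projSym) (v.map projSym) := by
  obtain ⟨x, y, ⟨A, X⟩, hu, hv⟩ := h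
  refine ⟨x.map projSym, y.map projSym, A, by simp [hu, projSym], ?_⟩
  rcases hv with ⟨w, hw, rfl⟩ | ⟨⟨B, Y⟩, ⟨C, Z⟩, hBC, rfl⟩
  · exact Or.inl ⟨w, hw.2, by simp [projSym]⟩
  · exact Or.inr ⟨B, C, hBC.2.2.2.2.2, by simp [projSym]⟩

theorem annot_derives_proj (G : CFG ν τ) {u v : List ((ν × Set ν) ⊕ τ)}
    (h : (annot G).Derives u v) : G.Derives (u.map projSym) (v.map projSym) :=
  Relation.ReflTransGen.lift (List.map projSym) (fun _ _ hab => annot_step_proj G hab) _ _ h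

/-- Annotate every nonterminal with the set `U` of productive nonterminals. -/
def annSym (G : CFG ν τ) : ν ⊕ τ → (ν × Set ν) ⊕ τ :=
  Sum.map (fun A => (A, {A | G.ProductiveNT A})) id

/-- Lifting: a derivation of a terminal word lifts to the annotated grammar. -/
theorem annot_lift (G : CFG ν τ) {u : List (ν ⊕ τ)} {w : List τ}
    (h : G.Derives u (w.map Sum.inr)) :
    (annot G).Derives (u.map (annSym G)) (w.map Sum.inr) := by
  induction h using Relation.ReflTransGen.head_induction_on with
  | refl =>
    have : (w.map Sum.inr).map (annSym G) = w.map Sum.inr := by simp [annSym]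
    rw [this]
    exact Relation.ReflTransGen.refl
  | head hstep hder ih =>
    rename_i u v
    have huv : G.Derives u (w.map Sum.inr) := Relation.ReflTransGen.head hstep hder
    obtain ⟨x, y, A, hu, hv⟩ := hstep
    subst hu
    have hAprod : G.ProductiveNT A := G.productive_of_mem huv A (by simp)
    refine Relation.ReflTransGen.head ?_ ih
    rcases hv with ⟨w', hw', rfl⟩ | ⟨B, C, hBC, rfl⟩
    · exact ⟨x.map (annSym G), y.map (annSym G), (A, {A | G.ProductiveNT A}),
        by simp [annSym], Or.inl ⟨w', ⟨hAprod, hw'⟩, by simp [annSym]⟩⟩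
    · have hB : G.ProductiveNT B := G.productive_of_mem hder B (by simp)
      have hC : G.ProductiveNT C := G.productive_of_mem hder C (by simp)
      exact ⟨x.map (annSym G), y.map (annSym G), (A, {A | G.ProductiveNT A}),
        by simp [annSym],
        Or.inr ⟨(B, {A | G.ProductiveNT A}), (C, {A | G.ProductiveNT A}),
          ⟨hAprod, hB, hC, rfl, rfl, hBC⟩, by simp [annSym]⟩⟩

/-- Invariant: every nonterminal reachable from the annotated start symbol has
the form `(A, U)` with `A` productive. -/
theorem annot_invariant (G : CFG ν τ) (hS : G.ProductiveNT G.start)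
    {u : List ((ν × Set ν) ⊕ τ)}
    (h : (annot G).Derives [Sum.inl (annot G).start] u) :
    ∀ p : ν × Set ν, Sum.inl p ∈ u → p.2 = {A | G.ProductiveNT A} ∧ G.ProductiveNT p.1 := by
  induction h with
  | refl =>
    intro p hp
    have : p = (annot G).start := by simpa using hp
    subst this
    exact ⟨rfl, hS⟩
  | tail _ hstep ih =>
    intro p hp
    obtain ⟨x, y, q, hu, hv⟩ := hstep
    subst hu
    rcases hv with ⟨w', hw', rfl⟩ | ⟨q1, q2, hBC, rfl⟩
    · rcases List.mem_append.mp hp with hxm | hy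
      · rcases List.mem_append.mp hxm with hx | hmid
        · exact ih p (by simp [hx])
        · exact absurd hmid (by simp)
      · exact ih p (by simp [hy])
    · rcases List.mem_append.mp hp with hxm | hy
      · rcases List.mem_append.mp hxm with hx | hmid
        · exact ih p (by simp [hx])
        · obtain ⟨_, hB, hC, hY, hZ, _⟩ := hBC
          have hq := ih q (by simp)
          rcases List.mem_cons.mp hmid with h1 | h2
          · obtain rfl : p = q1 := by simpa using h1
            exact ⟨hY.trans hq.1, by rw [hY.trans hq.1] at hB; exact hB⟩
          · obtain rfl : p = q2 := by simpa using h2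
            exact ⟨hZ.trans hq.1, by rw [hZ.trans hq.1] at hC; exact hC⟩
      · exact ih p (by simp [hy])

end Annot

theorem stmt17 {ν τ : Type} (G : CFG ν τ) (hS : G.ProductiveNT G.start) :
    (annot G).Lang = G.Lang ∧
    (∀ u : List ((ν × Set ν) ⊕ τ),
      (annot G).Derives [Sum.inl (annot G).start] u →
      ∃ w : List τ, (annot G).Derives u (w.map Sum.inr)) := by
  constructor
  · ext w
    constructor
    · intro h
      have := annot_derives_proj G h
      simpa [CFG.Lang, projSym, annot, Function.comp_def] using this
    · intro h
      have := annot_lift G h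
      simpa [CFG.Lang, annSym, annot] using this
  · intro u hu
    apply (annot G).derives_of_forall_productive
    intro s hs
    match s with
    | Sum.inr t => exact Or.inl ⟨t, rfl⟩
    | Sum.inl p =>
      refine Or.inr ⟨p, rfl, ?_⟩
      obtain ⟨A0, X0⟩ := p
      obtain ⟨hU, wA, hA⟩ := annot_invariant G hS hu (A0, X0) hs
      simp only at hU
      subst hU
      exact ⟨wA, by simpa [annSym] using annot_lift G hA⟩
end
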